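/- arXiv:2311.08556 — 7 statements merged into one kernel-verified Lean document; each statement's English description precedes it below -/
import Mathlib

section
/- If a k-uniform hypergraph H has the μ-fractional property and there exists a hypergraph homomorphism ψ from a k-uniform hypergraph G to H, then G also has the μ-fractional property. -/
/-!
Push the weights of `G` forward along `ψ`, giving each vertex of `H` the total weight of its
fibre. An independent set `Z` of `H` that is heavy for these weights pulls back to `ψ⁻¹(Z)`,
which carries the same weight, and is independent in `G` because an edge inside `ψ⁻¹(Z)`
would map onto an edge of `H` inside `Z`.
-/

/-- A set of vertices is independent if it contains no edge. -/
def HypIndep {α : Type*} (E : Finset (Finset α)) (Z : Finset α) : Prop :=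
  ∀ e ∈ E, ¬ e ⊆ Z

/-- The μ-fractional property of a hypergraph with vertex set `V` and edge set `E`. -/
def FracProp {α : Type*} (V : Finset α) (E : Finset (Finset α)) (μ : ℝ) : Prop :=
  ∀ w : α → ℝ, (∀ i, 0 ≤ w i) →
    ∃ Z ⊆ V, HypIndep E Z ∧ μ * ∑ i ∈ V, w i ≤ ∑ i ∈ Z, w i

open Finset

section Pushforward

variable {α β : Type*} [DecidableEq β]

def pushWeight (V : Finset α) (ψ : α → β) (w : α → ℝ) (b : β) : ℝ :=
  ∑ i ∈ V with ψ i = b, w i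

variable {V : Finset α} {ψ : α → β} {w : α → ℝ}

lemma pushWeight_nonneg (hw : ∀ i, 0 ≤ w i) (b : β) : 0 ≤ pushWeight V ψ w b :=
  sum_nonneg fun i _ => hw i

lemma sum_pushWeight (Z : Finset β) :
    ∑ b ∈ Z, pushWeight V ψ w b = ∑ i ∈ V with ψ i ∈ Z, w i :=
  sum_fiberwise_eq_sum_filter V Z ψ w

lemma sum_pushWeight_of_mapsTo {W : Finset β} (h : ∀ i ∈ V, ψ i ∈ W) :
    ∑ b ∈ W, pushWeight V ψ w b = ∑ i ∈ V, w i :=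
  sum_fiberwise_of_maps_to h w

lemma HypIndep.filter_preimage {EG : Finset (Finset α)} {EH : Finset (Finset β)}
    (hψE : ∀ e ∈ EG, e.image ψ ∈ EH) {Z : Finset β} (hZ : HypIndep EH Z) (V : Finset α) :
    HypIndep EG {i ∈ V | ψ i ∈ Z} := by
  intro e he heZ
  refine hZ _ (hψE e he) fun b hb => ?_
  obtain ⟨i, hi, rfl⟩ := mem_image.mp hb
  exact (mem_filter.mp (heZ hi)).2

end Pushforward

theorem homomorphism_preserves_fracProp_general
    {α β : Type*} [DecidableEq β] (μ : ℝ)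
    (VG : Finset α) (EG : Finset (Finset α)) (VH : Finset β) (EH : Finset (Finset β))
    (ψ : α → β) (hψV : ∀ i ∈ VG, ψ i ∈ VH)
    (hψE : ∀ e ∈ EG, e.image ψ ∈ EH)
    (hH : FracProp VH EH μ) :
    FracProp VG EG μ := by
  intro w hw
  obtain ⟨Z, -, hZ, hZw⟩ := hH (pushWeight VG ψ w) (pushWeight_nonneg hw)
  refine ⟨{i ∈ VG | ψ i ∈ Z}, filter_subset _ _, hZ.filter_preimage hψE VG, ?_⟩
  rwa [sum_pushWeight_of_mapsTo hψV, sum_pushWeight] at hZw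

theorem homomorphism_preserves_fracProp
    {α β : Type*} [DecidableEq α] [DecidableEq β] (k : ℕ) (μ : ℝ)
    (hμ0 : 0 < μ) (hμ1 : μ ≤ 1)
    (VG : Finset α) (EG : Finset (Finset α)) (VH : Finset β) (EH : Finset (Finset β))
    (hGuniform : ∀ e ∈ EG, e.card = k) (hHuniform : ∀ e ∈ EH, e.card = k)
    (hGedges : ∀ e ∈ EG, e ⊆ VG) (hHedges : ∀ e ∈ EH, e ⊆ VH)
    (ψ : α → β) (hψV : ∀ i ∈ VG, ψ i ∈ VH)
    (hψE : ∀ e ∈ EG, e.image ψ ∈ EH)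
    (hH : FracProp VH EH μ) :
    FracProp VG EG μ :=
  homomorphism_preserves_fracProp_general μ VG EG VH EH ψ hψV hψE hH
end

section
/- For all integers n, ℓ ≥ 3, the 3-uniform shift hypergraph Sh^{(3)}(n, ℓ) contains no copy of K_4^{(3)-}, the 3-uniform hypergraph with four vertices and three edges. -/
/-!
In an edge of `Sh^(3)(n, ℓ)` the three windows start at `a₀ < a₁ < a₂`, and two of them meet in
`ℓ - 2` points if the start of the third lies between theirs, in `ℓ - 1` points otherwise.
Three edges on four vertices share a vertex `v`; for each other vertex `x` the pair `{v, x}` lies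
in two of them, so whether the start of `y` lies between the starts of `v` and `x` must be the same
for both vertices `y ∉ {v, x}`. This fails for the `x` two steps away from `v` in the order of the
four starts.
-/

/-- `e` is an edge of the 3-uniform shift hypergraph `Sh^(3)(n, ℓ)`: for an increasing
sequence `a 0 < a 1 < ⋯ < a (ℓ+1)` in `[n]`, the three shifted `ℓ`-element windows form
an edge. -/
def ShiftEdge3 (n ℓ : ℕ) (e : Finset (Finset ℕ)) : Prop :=
  ∃ a : ℕ → ℕ, StrictMono a ∧ (∀ j < 3 + ℓ - 1, a j ∈ Finset.Icc 1 n) ∧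
    e = { Finset.image a (Finset.Ico 0 ℓ),
          Finset.image a (Finset.Ico 1 (1 + ℓ)),
          Finset.image a (Finset.Ico 2 (2 + ℓ)) }

open Finset Function

theorem StrictMono.mem_uIoo_iff {α β : Type*} [LinearOrder α] [LinearOrder β] {f : α → β}
    (hf : StrictMono f) {a b c : α} : f c ∈ Set.uIoo (f a) (f b) ↔ c ∈ Set.uIoo a b := by
  simp only [Set.uIoo, ← hf.monotone.map_min, ← hf.monotone.map_max, Set.mem_Ioo, hf.lt_iff_lt]

/-- Some `x ∈ {p, q, r}` is two steps away from `v` in the order of `{v, p, q, r}`, so exactly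
one of the other two lies between `v` and `x`. -/
theorem not_mem_uIoo_iff_of_four_distinct {α : Type*} [LinearOrder α] {v p q r : α}
    (hp : v ≠ p) (hq : v ≠ q) (hr : v ≠ r) (hpq : p ≠ q) (hpr : p ≠ r) (hqr : q ≠ r) :
    ¬ ((q ∈ Set.uIoo v p ↔ r ∈ Set.uIoo v p) ∧ (p ∈ Set.uIoo v q ↔ r ∈ Set.uIoo v q) ∧
      (p ∈ Set.uIoo v r ↔ q ∈ Set.uIoo v r)) := by
  simp only [Set.uIoo, Set.mem_Ioo, inf_lt_iff, lt_sup_iff]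
  grind

theorem Finset.exists_eq_compl_singleton {α : Type*} [Fintype α] [DecidableEq α] {s : Finset α}
    (hs : #s + 1 = Fintype.card α) : ∃ a, s = {a}ᶜ := by
  obtain ⟨a, ha⟩ := card_eq_one.1 (show #sᶜ = 1 by rw [card_compl]; omega)
  exact ⟨a, by rw [← ha, compl_compl]⟩

def shiftWindow (a : ℕ → ℕ) (ℓ i : ℕ) : Finset ℕ := (Finset.Ico i (i + ℓ)).image a

section shiftWindow

variable {a : ℕ → ℕ} {ℓ : ℕ}

theorem min_shiftWindow (ha : StrictMono a) (hℓ : 0 < ℓ) (i : ℕ) :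
    (shiftWindow a ℓ i).min = a i := by
  refine le_antisymm (Finset.min_le (mem_image_of_mem a (by simp [hℓ])))
    (Finset.le_min fun b hb => ?_)
  obtain ⟨j, hj, rfl⟩ := mem_image.1 hb
  exact WithTop.coe_le_coe.2 (ha.monotone (Finset.mem_Ico.1 hj).1)

theorem card_shiftWindow_inter (ha : StrictMono a) (i j : ℕ) :
    #(shiftWindow a ℓ i ∩ shiftWindow a ℓ j) = min (i + ℓ) (j + ℓ) - max i j := by
  rw [shiftWindow, shiftWindow, ← image_inter _ _ ha.injective, Ico_inter_Ico,
    card_image_of_injective _ ha.injective, Nat.card_Ico]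

end shiftWindow

theorem ShiftEdge3.exists_shiftWindow {n ℓ : ℕ} {e : Finset (Finset ℕ)} (he : ShiftEdge3 n ℓ e) :
    ∃ a, StrictMono a ∧ ∀ u ∈ e, ∃ i < 3, u = shiftWindow a ℓ i := by
  obtain ⟨a, ha, -, rfl⟩ := he
  refine ⟨a, ha, fun u hu => ?_⟩
  simp only [mem_insert, Finset.mem_singleton] at hu
  rcases hu with rfl | rfl | rfl
  exacts [⟨0, by simp [shiftWindow]⟩, ⟨1, by simp [shiftWindow, add_comm]⟩,
    ⟨2, by simp [shiftWindow, add_comm]⟩]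

theorem ShiftEdge3.min_ne_and_card_inter_eq_iff {n ℓ : ℕ} {e : Finset (Finset ℕ)}
    (he : ShiftEdge3 n ℓ e) (hℓ : 2 ≤ ℓ) {u v w : Finset ℕ} (hu : u ∈ e) (hv : v ∈ e)
    (hw : w ∈ e) (huv : u ≠ v) (huw : u ≠ w) (hvw : v ≠ w) :
    u.min ≠ v.min ∧ (#(u ∩ v) = ℓ - 2 ↔ w.min ∈ Set.uIoo u.min v.min) := by
  obtain ⟨a, ha, hwin⟩ := he.exists_shiftWindow
  obtain ⟨i, hi, rfl⟩ := hwin u hu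
  obtain ⟨j, hj, rfl⟩ := hwin v hv
  obtain ⟨k, hk, rfl⟩ := hwin w hw
  have hij := ne_of_apply_ne (shiftWindow a ℓ) huv
  have hik := ne_of_apply_ne (shiftWindow a ℓ) huw
  have hjk := ne_of_apply_ne (shiftWindow a ℓ) hvw
  have hcoe : StrictMono ((↑) ∘ a : ℕ → WithTop ℕ) := WithTop.coe_strictMono.comp ha
  rw [min_shiftWindow ha (by omega), min_shiftWindow ha (by omega), min_shiftWindow ha (by omega),
    card_shiftWindow_inter ha]
  refine ⟨WithTop.coe_injective.ne (ha.injective.ne hij), ?_⟩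
  refine Iff.trans ?_ hcoe.mem_uIoo_iff.symm
  simp only [Set.uIoo, Set.mem_Ioo]
  omega

theorem ShiftEdge3.false_of_K4minus {n ℓ : ℕ} (hℓ : 2 ≤ ℓ) {v p q r : Finset ℕ}
    (hvp : v ≠ p) (hvq : v ≠ q) (hvr : v ≠ r) (hpq : p ≠ q) (hpr : p ≠ r) (hqr : q ≠ r)
    {e₁ e₂ e₃ : Finset (Finset ℕ)} (he₁ : ShiftEdge3 n ℓ e₁) (he₂ : ShiftEdge3 n ℓ e₂)
    (he₃ : ShiftEdge3 n ℓ e₃) (h₁ : {v, p, q} ⊆ e₁) (h₂ : {v, p, r} ⊆ e₂)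
    (h₃ : {v, q, r} ⊆ e₃) : False := by
  simp only [insert_subset_iff, Finset.singleton_subset_iff] at h₁ h₂ h₃
  obtain ⟨hv₁, hp₁, hq₁⟩ := h₁
  obtain ⟨hv₂, hp₂, hr₂⟩ := h₂
  obtain ⟨hv₃, hq₃, hr₃⟩ := h₃
  obtain ⟨hmvp, hp_qr⟩ := he₁.min_ne_and_card_inter_eq_iff hℓ hv₁ hp₁ hq₁ hvp hvq hpq
  obtain ⟨hmvq, hq_pr⟩ := he₁.min_ne_and_card_inter_eq_iff hℓ hv₁ hq₁ hp₁ hvq hvp hpq.symm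
  obtain ⟨hmpq, -⟩ := he₁.min_ne_and_card_inter_eq_iff hℓ hp₁ hq₁ hv₁ hpq hvp.symm hvq.symm
  obtain ⟨hmpr, -⟩ := he₂.min_ne_and_card_inter_eq_iff hℓ hp₂ hr₂ hv₂ hpr hvp.symm hvr.symm
  obtain ⟨-, hp_rq⟩ := he₂.min_ne_and_card_inter_eq_iff hℓ hv₂ hp₂ hr₂ hvp hvr hpr
  obtain ⟨hmvr, hr_pq⟩ := he₂.min_ne_and_card_inter_eq_iff hℓ hv₂ hr₂ hp₂ hvr hvp hpr.symm
  obtain ⟨hmqr, -⟩ := he₃.min_ne_and_card_inter_eq_iff hℓ hq₃ hr₃ hv₃ hqr hvq.symm hvr.symm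
  obtain ⟨-, hq_rp⟩ := he₃.min_ne_and_card_inter_eq_iff hℓ hv₃ hq₃ hr₃ hvq hvr hqr
  obtain ⟨-, hr_qp⟩ := he₃.min_ne_and_card_inter_eq_iff hℓ hv₃ hr₃ hq₃ hvr hvq hqr.symm
  exact not_mem_uIoo_iff_of_four_distinct hmvp hmvq hmvr hmpq hmpr hmqr
    ⟨hp_qr.symm.trans hp_rq, hq_pr.symm.trans hq_rp, hr_pq.symm.trans hr_qp⟩

theorem shift_hypergraph_K43minus_free_general (n ℓ : ℕ) (hℓ : 3 ≤ ℓ) :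
    ¬ ∃ (x : Fin 4 → Finset ℕ) (S : Fin 3 → Finset (Fin 4)),
      Function.Injective x ∧ Function.Injective S ∧ (∀ t, (S t).card = 3) ∧
      (∀ t, ShiftEdge3 n ℓ ((S t).image x)) := by
  rintro ⟨x, S, hx, hS, hcard, hedge⟩
  choose w hw using fun t => exists_eq_compl_singleton (s := S t) (by simp [hcard])
  have hw_inj : Injective w := fun s t h => hS (by rw [hw, hw, h])
  obtain ⟨v, hv⟩ : ∃ v, ∀ t, w t ≠ v := by
    by_contra! hw_surj
    simpa using Fintype.card_le_of_surjective w hw_surj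
  have hsub : ∀ t i j, i ≠ w t → j ≠ w t → {x v, x i, x j} ⊆ (S t).image x := fun t i j hi hj => by
    simpa [image_insert] using image_subset_image (f := x)
      (show {v, i, j} ⊆ S t by simp [hw, hv t, hi.symm, hj.symm])
  have h01 := hw_inj.ne (show (0 : Fin 3) ≠ 1 by decide)
  have h02 := hw_inj.ne (show (0 : Fin 3) ≠ 2 by decide)
  have h12 := hw_inj.ne (show (1 : Fin 3) ≠ 2 by decide)
  exact ShiftEdge3.false_of_K4minus (by omega) (hx.ne (hv 0).symm) (hx.ne (hv 1).symm)
    (hx.ne (hv 2).symm) (hx.ne h01) (hx.ne h02) (hx.ne h12) (hedge 2) (hedge 1) (hedge 0)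
    (hsub 2 _ _ h02 h12) (hsub 1 _ _ h01 h12.symm) (hsub 0 _ _ h01.symm h02.symm)

/-- `Sh^(3)(n, ℓ)` contains no copy of `K₄^(3)-`, i.e. no four distinct vertices
carrying three distinct edges. -/
theorem shift_hypergraph_K43minus_free (n ℓ : ℕ) (hn : 3 ≤ n) (hℓ : 3 ≤ ℓ) :
    ¬ ∃ (x : Fin 4 → Finset ℕ) (S : Fin 3 → Finset (Fin 4)),
      Function.Injective x ∧ Function.Injective S ∧ (∀ t, (S t).card = 3) ∧
      (∀ t, ShiftEdge3 n ℓ ((S t).image x)) :=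
  shift_hypergraph_K43minus_free_general n ℓ hℓ
end

section
/- For all integers k ≥ 3 and m ≥ 1 there exist m pairwise disjoint combinatorial lines L_1, ..., L_m in the Hales-Jewett cube [k]^{2m} such that the only quasilines contained in the union L_1 ∪ ... ∪ L_m are the lines L_1, ..., L_m themselves. -/
/-!
Split the `2m` coordinates into `m` pairs. Line `i` runs diagonally through pair `i` and is
constantly `(a, b)`, with `a ≠ b`, on every other pair. So on pair `i` the points of line `i` are
diagonal and the points of every other line equal `(a, b)`.

Let a quasiline `Q` in the union meet line `i` and some other line. The two coordinates of pair
`i` cannot both be constant on `Q`, since `Q` has a diagonal and an off-diagonal point there. If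
the first one is injective, it takes every value on `Q`; the point where it equals `b` lies on
line `i`, so its second coordinate is `b`, like that of the off-diagonal point, which makes the
second coordinate constant; the point of line `i` where the first coordinate equals a third value
`c` contradicts this. The case where the second coordinate is injective is symmetric.
-/

/-- `L` is a combinatorial line in the Hales-Jewett cube `[k]^n`. -/
def IsLine (k n : ℕ) (L : Finset (Fin n → Fin k)) : Prop :=
  ∃ η : Fin k → Fin n → Fin k,
    (∃ M : Finset (Fin n), M.Nonempty ∧
      (∀ i : Fin k, ∀ j ∈ M, η i j = i) ∧
      (∀ i i' : Fin k, ∀ j : Fin n, j ∉ M → η i j = η i' j)) ∧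
    L = Finset.image η Finset.univ

/-- `L` is a quasiline in `[k]^n`: a `k`-element set whose entries in every coordinate
are either all identical or mutually distinct. -/
def IsQuasiline (k n : ℕ) (L : Finset (Fin n → Fin k)) : Prop :=
  L.card = k ∧ ∀ ν : Fin n,
    (∀ x ∈ L, ∀ y ∈ L, x ν = y ν) ∨
    (∀ x ∈ L, ∀ y ∈ L, x ≠ y → x ν ≠ y ν)

open Finset

namespace IsQuasiline

variable {k n : ℕ} {Q S : Finset (Fin n → Fin k)} {u v : Fin n} {a b c : Fin k}

theorem apply_eq_or_injOn (hQ : IsQuasiline k n Q) (ν : Fin n) :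
    (∀ x ∈ Q, ∀ y ∈ Q, x ν = y ν) ∨ Set.InjOn (fun x : Fin n → Fin k => x ν) Q := by
  refine (hQ.2 ν).imp id fun hν x hx y hy hxy => ?_
  by_contra hne
  exact hν x hx y hy hne hxy

theorem exists_apply_eq_of_injOn (hQ : IsQuasiline k n Q)
    (hν : Set.InjOn (fun x : Fin n → Fin k => x ν) Q) (c : Fin k) : ∃ x ∈ Q, x ν = c :=
  surjOn_of_injOn_of_card_le (t := univ) _ (fun _ _ => mem_coe.2 (mem_univ _)) hν
    (by rw [card_univ, Fintype.card_fin, hQ.1]) (mem_coe.2 (mem_univ c))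

theorem subset_of_injOn (hQ : IsQuasiline k n Q) (hab : a ≠ b) (hca : c ≠ a) (hcb : c ≠ b)
    (hdiag : ∀ x ∈ Q, x ∈ S → x u = x v) (hoff : ∀ x ∈ Q, x ∉ S → x u = a ∧ x v = b)
    (hu : Set.InjOn (fun x : Fin n → Fin k => x u) Q) : Q ⊆ S := by
  have mem_of_apply_ne {x} (hx : x ∈ Q) (hxa : x u ≠ a) : x ∈ S := by
    by_contra hxS
    exact hxa (hoff x hx hxS).1
  intro q hq
  by_contra hqS
  obtain ⟨x, hx, hxb⟩ := hQ.exists_apply_eq_of_injOn hu b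
  obtain ⟨y, hy, hyc⟩ := hQ.exists_apply_eq_of_injOn hu c
  have hxS : x ∈ S := mem_of_apply_ne hx (hxb ▸ hab.symm)
  have hyS : y ∈ S := mem_of_apply_ne hy (hyc ▸ hca)
  have hv_const : ∀ z ∈ Q, ∀ w ∈ Q, z v = w v := by
    refine (hQ.apply_eq_or_injOn v).resolve_right fun hv => ?_
    have hxq : x = q := hv hx hq <| by
      change x v = q v
      rw [← hdiag x hx hxS, hxb, (hoff q hq hqS).2]
    exact hqS (hxq ▸ hxS)
  have hyv : y v = b := (hv_const y hy q hq).trans (hoff q hq hqS).2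
  exact hcb (hyc ▸ (hdiag y hy hyS).trans hyv)

theorem subset_of_mem (hQ : IsQuasiline k n Q) (hab : a ≠ b) (hca : c ≠ a) (hcb : c ≠ b)
    (hdiag : ∀ x ∈ Q, x ∈ S → x u = x v) (hoff : ∀ x ∈ Q, x ∉ S → x u = a ∧ x v = b)
    {p : Fin n → Fin k} (hp : p ∈ Q) (hpS : p ∈ S) : Q ⊆ S := by
  rcases hQ.apply_eq_or_injOn u with hu | hu
  · rcases hQ.apply_eq_or_injOn v with hv | hv
    · intro q hq
      by_contra hqS
      obtain ⟨hqa, hqb⟩ := hoff q hq hqS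
      exact hab (by rw [← hqa, ← hqb, ← hu p hp q hq, ← hv p hp q hq, hdiag p hp hpS])
    · exact hQ.subset_of_injOn hab.symm hcb hca (fun x hx hxS => (hdiag x hx hxS).symm)
        (fun x hx hxS => (hoff x hx hxS).symm) hv
  · exact hQ.subset_of_injOn hab hca hcb hdiag hoff hu

end IsQuasiline

section BlockLines

variable {k m : ℕ}

/-- The coordinates of `[k]^(2m)` are grouped into `m` pairs: `finProdFinEquiv (r, j)` is
coordinate `r` of pair `j`. -/
def blockLineMap (a b : Fin k) (i : Fin m) (t : Fin k) (ν : Fin (2 * m)) : Fin k :=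
  if (finProdFinEquiv.symm ν).2 = i then t else ![a, b] (finProdFinEquiv.symm ν).1

def blockLine (a b : Fin k) (i : Fin m) : Finset (Fin (2 * m) → Fin k) :=
  univ.image (blockLineMap a b i)

@[simp]
theorem blockLineMap_apply (a b : Fin k) (i : Fin m) (t : Fin k) (r : Fin 2) (j : Fin m) :
    blockLineMap a b i t (finProdFinEquiv (r, j)) = if j = i then t else ![a, b] r := by
  simp [blockLineMap]

theorem blockLineMap_injective (a b : Fin k) (i : Fin m) : (blockLineMap a b i).Injective :=
  fun t s h => by simpa using congrFun h (finProdFinEquiv (0, i))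

theorem card_blockLine (a b : Fin k) (i : Fin m) : #(blockLine a b i) = k := by
  rw [blockLine, card_image_of_injective _ (blockLineMap_injective a b i), card_univ,
    Fintype.card_fin]

theorem isLine_blockLine (a b : Fin k) (i : Fin m) : IsLine k (2 * m) (blockLine a b i) := by
  refine ⟨blockLineMap a b i, ⟨univ.filter fun ν => (finProdFinEquiv.symm ν).2 = i,
    ⟨finProdFinEquiv (0, i), mem_filter.2 ⟨mem_univ _, by rw [Equiv.symm_apply_apply]⟩⟩,
    fun t ν hν => ?_, fun t t' ν hν => ?_⟩, rfl⟩
  · rw [mem_filter] at hν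
    simp only [blockLineMap, if_pos hν.2]
  · simp only [mem_filter, mem_univ, true_and] at hν
    simp only [blockLineMap, if_neg hν]

theorem mem_blockLine {a b : Fin k} {i : Fin m} {x : Fin (2 * m) → Fin k} :
    x ∈ blockLine a b i ↔ ∃ t, blockLineMap a b i t = x := by
  simp [blockLine]

theorem apply_eq_of_mem_blockLine {a b : Fin k} {i : Fin m} {x : Fin (2 * m) → Fin k}
    (hx : x ∈ blockLine a b i) : x (finProdFinEquiv (0, i)) = x (finProdFinEquiv (1, i)) := by
  obtain ⟨t, rfl⟩ := mem_blockLine.1 hx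
  simp

theorem apply_eq_of_mem_blockLine_of_ne {a b : Fin k} {i j : Fin m} (hij : i ≠ j)
    {x : Fin (2 * m) → Fin k} (hx : x ∈ blockLine a b j) :
    x (finProdFinEquiv (0, i)) = a ∧ x (finProdFinEquiv (1, i)) = b := by
  obtain ⟨t, rfl⟩ := mem_blockLine.1 hx
  simp [hij]

theorem disjoint_blockLine {a b : Fin k} (hab : a ≠ b) {i j : Fin m} (hij : i ≠ j) :
    Disjoint (blockLine a b i) (blockLine a b j) := by
  refine disjoint_left.2 fun x hxi hxj => hab ?_
  obtain ⟨hxa, hxb⟩ := apply_eq_of_mem_blockLine_of_ne hij hxj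
  rw [← hxa, ← hxb, apply_eq_of_mem_blockLine hxi]

end BlockLines

theorem disjoint_lines_in_general_position_general (k m : ℕ) (hk : 3 ≤ k) :
    ∃ L : Fin m → Finset (Fin (2 * m) → Fin k),
      (∀ i, IsLine k (2 * m) (L i)) ∧
      (∀ i j, i ≠ j → Disjoint (L i) (L j)) ∧
      (∀ Q : Finset (Fin (2 * m) → Fin k), IsQuasiline k (2 * m) Q →
        Q ⊆ Finset.univ.biUnion L → ∃ i, Q = L i) := by
  let a : Fin k := ⟨0, by omega⟩
  let b : Fin k := ⟨1, by omega⟩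
  let c : Fin k := ⟨2, by omega⟩
  have hab : a ≠ b := by simp [a, b]
  have hca : c ≠ a := by simp [a, c]
  have hcb : c ≠ b := by simp [b, c]
  refine ⟨blockLine a b, isLine_blockLine a b, fun i j => disjoint_blockLine hab, ?_⟩
  intro Q hQ hQL
  obtain ⟨p, hp⟩ : Q.Nonempty := card_pos.1 (by rw [hQ.1]; omega)
  obtain ⟨i, -, hpi⟩ := mem_biUnion.1 (hQL hp)
  have hoff : ∀ x ∈ Q, x ∉ blockLine a b i →
      x (finProdFinEquiv (0, i)) = a ∧ x (finProdFinEquiv (1, i)) = b := by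
    intro x hx hxi
    obtain ⟨j, -, hxj⟩ := mem_biUnion.1 (hQL hx)
    exact apply_eq_of_mem_blockLine_of_ne (by rintro rfl; exact hxi hxj) hxj
  have hQi := hQ.subset_of_mem hab hca hcb (fun x _ => apply_eq_of_mem_blockLine) hoff hp hpi
  exact ⟨i, eq_of_subset_of_card_le hQi (by rw [card_blockLine, hQ.1])⟩

theorem disjoint_lines_in_general_position (k m : ℕ) (hk : 3 ≤ k) (hm : 1 ≤ m) :
    ∃ L : Fin m → Finset (Fin (2 * m) → Fin k),
      (∀ i, IsLine k (2 * m) (L i)) ∧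
      (∀ i j, i ≠ j → Disjoint (L i) (L j)) ∧
      (∀ Q : Finset (Fin (2 * m) → Fin k), IsQuasiline k (2 * m) Q →
        Q ⊆ Finset.univ.biUnion L → ∃ i, Q = L i) :=
  disjoint_lines_in_general_position_general k m hk
end

section
/- Let F ⊆ ℝ^d be a finite configuration. There exists ε = ε(F) > 0 such that for all functions ρ, σ: F → F the following holds: if there is a real q with |q·‖f'−f''‖² − (ρ(f')−ρ(f''))·(σ(f')−σ(f''))| ≤ ε for all f', f'' ∈ F, then there exists a real q̄ with q̄·‖f'−f''‖² = (ρ(f')−ρ(f''))·(σ(f')−σ(f'')) for all f', f'' ∈ F. -/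
lemma aux_eps {ι : Type*} (A B : ι → ℝ) (hA0 : ∀ i, 0 ≤ A i)
    (hzero : ∀ i, A i = 0 → B i = 0) :
    ∃ δ : ℝ, 0 < δ ∧ ((¬ ∃ q : ℝ, ∀ i, q * A i = B i) →
      ∀ q : ℝ, ∃ i, δ < |q * A i - B i|) := by
  by_cases hP : ∃ q : ℝ, ∀ i, q * A i = B i
  · exact ⟨1, one_pos, fun hn => (hn hP).elim⟩
  have hex : ∃ i, A i ≠ 0 := by
    by_contra h'
    push_neg at h'
    exact hP ⟨0, fun i => by rw [h' i, mul_zero, hzero i (h' i)]⟩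
  obtain ⟨i₀, hi₀⟩ := hex
  have hA0pos : 0 < A i₀ := lt_of_le_of_ne (hA0 i₀) (Ne.symm hi₀)
  set q₀ : ℝ := B i₀ / A i₀ with hq₀def
  have hq₀ : q₀ * A i₀ = B i₀ := div_mul_cancel₀ _ hi₀
  push_neg at hP
  obtain ⟨i₁, hi₁⟩ := hP q₀
  set c : ℝ := |q₀ * A i₁ - B i₁| with hcdef
  have hc : 0 < c := abs_pos.mpr (sub_ne_zero.mpr hi₁)
  have hA1pos : 0 < A i₁ := by
    rcases lt_or_eq_of_le (hA0 i₁) with h | h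
    · exact h
    · exact absurd (by rw [← h, mul_zero, hzero i₁ h.symm]) hi₁
  refine ⟨min (c / 4) (c * A i₀ / (4 * A i₁)), lt_min (by positivity) (by positivity), ?_⟩
  intro _ q
  by_contra h
  push_neg at h
  have h0 := h i₀
  have h1 := h i₁
  set δ : ℝ := min (c / 4) (c * A i₀ / (4 * A i₁)) with hδdef
  have hm1 : δ ≤ c / 4 := min_le_left _ _
  have hm2 : δ * (4 * A i₁) ≤ c * A i₀ := by
    have := min_le_right (c / 4) (c * A i₀ / (4 * A i₁))
    exact (le_div_iff₀ (by positivity)).mp this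
  have e1 : |q₀ - q| * A i₀ ≤ δ := by
    have e : |q₀ - q| * A i₀ = |q₀ * A i₀ - q * A i₀| := by
      rw [← sub_mul, abs_mul, abs_of_pos hA0pos]
    rw [e, hq₀, abs_sub_comm]
    exact h0
  have e2 : c ≤ |q₀ - q| * A i₁ + δ := by
    have t := abs_sub_le (q₀ * A i₁) (q * A i₁) (B i₁)
    have e : |q₀ * A i₁ - q * A i₁| = |q₀ - q| * A i₁ := by
      rw [← sub_mul, abs_mul, abs_of_pos hA1pos]
    rw [e] at t
    exact t.trans (by linarith)
  nlinarith [mul_le_mul_of_nonneg_right e1 hA1pos.le,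
    mul_le_mul_of_nonneg_right e2 hA0pos.le, abs_nonneg (q₀ - q),
    mul_pos hA0pos hA1pos, mul_nonneg (abs_nonneg (q₀ - q)) hA1pos.le]

theorem eps_approximation_lemma (d : ℕ) (F : Finset (EuclideanSpace ℝ (Fin d))) :
    ∃ ε : ℝ, 0 < ε ∧ ∀ ρ σ : F → F,
      (∃ q : ℝ, ∀ f f' : F,
        |q * ‖(f : EuclideanSpace ℝ (Fin d)) - (f' : EuclideanSpace ℝ (Fin d))‖ ^ 2 -
          (inner ℝ ((ρ f : EuclideanSpace ℝ (Fin d)) - (ρ f' : EuclideanSpace ℝ (Fin d)))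
                 ((σ f : EuclideanSpace ℝ (Fin d)) - (σ f' : EuclideanSpace ℝ (Fin d))) : ℝ)|
          ≤ ε) →
      ∃ q' : ℝ, ∀ f f' : F,
        q' * ‖(f : EuclideanSpace ℝ (Fin d)) - (f' : EuclideanSpace ℝ (Fin d))‖ ^ 2 =
          (inner ℝ ((ρ f : EuclideanSpace ℝ (Fin d)) - (ρ f' : EuclideanSpace ℝ (Fin d)))
                 ((σ f : EuclideanSpace ℝ (Fin d)) - (σ f' : EuclideanSpace ℝ (Fin d))) : ℝ) := by
  classical
  rcases F.eq_empty_or_nonempty with hF | hF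
  · exact ⟨1, one_pos, fun ρ σ _ => ⟨0, fun f _ => absurd f.2 (by simp [hF])⟩⟩
  haveI : Nonempty ↥F := hF.to_subtype
  have key : ∀ p : (↥F → ↥F) × (↥F → ↥F), ∃ δ : ℝ, 0 < δ ∧
      ((¬ ∃ q : ℝ, ∀ i : ↥F × ↥F,
          q * ‖(i.1 : EuclideanSpace ℝ (Fin d)) - (i.2 : EuclideanSpace ℝ (Fin d))‖ ^ 2 =
            (inner ℝ ((p.1 i.1 : EuclideanSpace ℝ (Fin d)) - (p.1 i.2 : EuclideanSpace ℝ (Fin d))) ((p.2 i.1 : EuclideanSpace ℝ (Fin d)) - (p.2 i.2 : EuclideanSpace ℝ (Fin d))) : ℝ)) →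
        ∀ q : ℝ, ∃ i : ↥F × ↥F, δ <
          |q * ‖(i.1 : EuclideanSpace ℝ (Fin d)) - (i.2 : EuclideanSpace ℝ (Fin d))‖ ^ 2 -
            (inner ℝ ((p.1 i.1 : EuclideanSpace ℝ (Fin d)) - (p.1 i.2 : EuclideanSpace ℝ (Fin d))) ((p.2 i.1 : EuclideanSpace ℝ (Fin d)) - (p.2 i.2 : EuclideanSpace ℝ (Fin d))) : ℝ)|) := by
    intro p
    apply aux_eps (fun i : ↥F × ↥F => ‖(i.1 : EuclideanSpace ℝ (Fin d)) - (i.2 : EuclideanSpace ℝ (Fin d))‖ ^ 2)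
      (fun i : ↥F × ↥F =>
        (inner ℝ ((p.1 i.1 : EuclideanSpace ℝ (Fin d)) - (p.1 i.2 : EuclideanSpace ℝ (Fin d))) ((p.2 i.1 : EuclideanSpace ℝ (Fin d)) - (p.2 i.2 : EuclideanSpace ℝ (Fin d))) : ℝ))
    · intro i; positivity
    · intro i hi
      have h1 : (i.1 : EuclideanSpace ℝ (Fin d)) = (i.2 : EuclideanSpace ℝ (Fin d)) := by
        have := pow_eq_zero_iff (n := 2) (by norm_num) |>.mp hi
        rw [norm_eq_zero] at this
        exact sub_eq_zero.mp this
      have h2 : i.1 = i.2 := Subtype.ext h1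
      simp [h2]
  choose δ hpos hδ using key
  refine ⟨Finset.univ.inf' Finset.univ_nonempty δ, ?_, ?_⟩
  · exact (Finset.lt_inf'_iff _).mpr fun p _ => hpos p
  intro ρ σ hq
  obtain ⟨q, hq⟩ := hq
  by_cases hex : ∃ q' : ℝ, ∀ i : ↥F × ↥F,
      q' * ‖(i.1 : EuclideanSpace ℝ (Fin d)) - (i.2 : EuclideanSpace ℝ (Fin d))‖ ^ 2 =
        (inner ℝ ((ρ i.1 : EuclideanSpace ℝ (Fin d)) - (ρ i.2 : EuclideanSpace ℝ (Fin d))) ((σ i.1 : EuclideanSpace ℝ (Fin d)) - (σ i.2 : EuclideanSpace ℝ (Fin d))) : ℝ)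
  · obtain ⟨q', hq'⟩ := hex
    exact ⟨q', fun f f' => hq' (f, f')⟩
  obtain ⟨i, hi⟩ := hδ (ρ, σ) hex q
  have hle : Finset.univ.inf' Finset.univ_nonempty δ ≤ δ (ρ, σ) :=
    Finset.inf'_le δ (Finset.mem_univ _)
  exact absurd (hq i.1 i.2) (not_le.mpr (lt_of_le_of_lt hle hi))
end

section
/- Let k ≥ 3 and n ≥ 1, let φ: [k]^n → ℤ be defined by φ(a) = ∑_{ν=1}^n T^{2^ν}·a(ν) for a sufficiently large integer T (depending on k and n). If a_1, ..., a_k ∈ [k]^n are distinct and φ(a_1), ..., φ(a_k) is an arithmetic progression of length k, then {a_1, ..., a_k} is a quasiline in [k]^n. -/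
open Finset

lemma eq_zero_of_sum_pow_mul_eq_zero {T : ℤ} :
    ∀ {n : ℕ} {e : Fin n → ℕ}, StrictMono e → ∀ {c : Fin n → ℤ}, (∀ ν, |c ν| < T) →
      ∑ ν, T ^ e ν * c ν = 0 → c = 0
  | 0, _, _, _, _, _ => Subsingleton.elim _ _
  | n + 1, e, he, c, hc, hsum => by
    rw [Fin.sum_univ_succ] at hsum
    have hT : T ≠ 0 := (abs_nonneg _).trans_lt (hc 0) |>.ne'
    have htail_dvd : T ^ (e 0 + 1) ∣ ∑ ν : Fin n, T ^ e ν.succ * c ν.succ :=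
      dvd_sum fun ν _ => (pow_dvd_pow T (he (Fin.succ_pos ν))).mul_right _
    have hc0 : c 0 = 0 := by
      have hdvd : T ^ e 0 * T ∣ T ^ e 0 * c 0 := by
        rw [← pow_succ, eq_neg_of_add_eq_zero_left hsum]
        exact htail_dvd.neg_right
      exact Int.eq_zero_of_abs_lt_dvd ((mul_dvd_mul_iff_left (pow_ne_zero _ hT)).mp hdvd) (hc 0)
    have htail : Fin.tail c = 0 := by
      refine eq_zero_of_sum_pow_mul_eq_zero (he.comp Fin.strictMono_succ) (fun ν => hc _) ?_
      simpa [hc0, Fin.tail] using hsum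
    ext ν
    cases ν using Fin.cases with
    | zero => exact hc0
    | succ ν => exact congr_fun htail ν

def IsArithProg {k : ℕ} (x : Fin k → ℤ) (d : ℤ) : Prop :=
  ∀ i (h : i + 1 < k), x ⟨i + 1, h⟩ - x ⟨i, Nat.lt_of_succ_lt h⟩ = d

namespace IsArithProg

variable {k : ℕ} {x : Fin k → ℤ} {d : ℤ}

lemma exists_of_steps_eq
    (h : ∀ i j (hi : i + 1 < k) (hj : j + 1 < k),
      x ⟨i + 1, hi⟩ - x ⟨i, Nat.lt_of_succ_lt hi⟩ = x ⟨j + 1, hj⟩ - x ⟨j, Nat.lt_of_succ_lt hj⟩) :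
    ∃ d, IsArithProg x d := by
  by_cases hk : 1 < k
  · exact ⟨_, fun i hi => h i 0 hi hk⟩
  · exact ⟨0, fun i hi => absurd hi (by omega)⟩

lemma apply_eq (hx : IsArithProg x d) (i : ℕ) (hi : i < k) :
    x ⟨i, hi⟩ = x ⟨0, Nat.zero_lt_of_lt hi⟩ + i * d := by
  induction i with
  | zero => simp
  | succ i ih =>
    have hstep := hx i hi
    rw [ih (Nat.lt_of_succ_lt hi)] at hstep
    push_cast
    linarith

lemma sub_eq (hx : IsArithProg x d) (i j : Fin k) : x j - x i = ((j : ℤ) - i) * d := by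
  rw [hx.apply_eq i i.isLt, hx.apply_eq j j.isLt]
  ring

lemma eq_const_or_injective (hx : IsArithProg x d) : (∀ i j, x i = x j) ∨ Function.Injective x := by
  rcases eq_or_ne d 0 with rfl | hd
  · left
    intro i j
    exact (sub_eq_zero.mp (by simpa using hx.sub_eq i j)).symm
  · right
    intro i j hij
    have := hx.sub_eq i j
    rw [hij, sub_self, zero_eq_mul, sub_eq_zero] at this
    exact Fin.ext (by exact_mod_cast (this.resolve_right hd).symm)

end IsArithProg

/-- The `+ 1` shifts coordinates from `Fin k` to the paper's `[k] = {1, …, k}`. -/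
def cubeEncode {k n : ℕ} (T : ℕ) (x : Fin n → Fin k) : ℤ :=
  ∑ ν : Fin n, (T : ℤ) ^ (2 ^ ((ν : ℕ) + 1)) * (((x ν : ℕ) : ℤ) + 1)

lemma cubeEncode_sub_cubeEncode {k n : ℕ} (T : ℕ) (x y : Fin n → Fin k) :
    cubeEncode T y - cubeEncode T x =
      ∑ ν : Fin n, (T : ℤ) ^ (2 ^ ((ν : ℕ) + 1)) * (((y ν : ℕ) : ℤ) - (x ν : ℕ)) := by
  rw [cubeEncode, cubeEncode, ← sum_sub_distrib]
  exact sum_congr rfl fun ν _ => by ring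

lemma isArithProg_coord_of_isArithProg_cubeEncode {k n T : ℕ} (hT : 2 * k ≤ T)
    {a : Fin k → Fin n → Fin k} {d : ℤ} (ha : IsArithProg (fun i => cubeEncode T (a i)) d)
    (ν : Fin n) : ∃ δ, IsArithProg (fun i => ((a i ν : ℕ) : ℤ)) δ := by
  refine IsArithProg.exists_of_steps_eq fun i j hi hj => ?_
  set step : ∀ i, i + 1 < k → Fin n → ℤ := fun i hi μ =>
    ((a ⟨i + 1, hi⟩ μ : ℕ) : ℤ) - (a ⟨i, Nat.lt_of_succ_lt hi⟩ μ : ℕ)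
  have hzero : (fun μ => step i hi μ - step j hj μ) = 0 := by
    refine eq_zero_of_sum_pow_mul_eq_zero (T := T)
      (fun _ _ h => Nat.pow_lt_pow_right Nat.one_lt_two (Nat.succ_lt_succ h)) (fun μ => ?_) ?_
    · have := (a ⟨i + 1, hi⟩ μ).isLt
      have := (a ⟨i, Nat.lt_of_succ_lt hi⟩ μ).isLt
      have := (a ⟨j + 1, hj⟩ μ).isLt
      have := (a ⟨j, Nat.lt_of_succ_lt hj⟩ μ).isLt
      simp only [step, abs_lt]
      constructor <;> omega
    · have hi' := ha i hi
      have hj' := ha j hj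
      simp only [cubeEncode_sub_cubeEncode] at hi' hj'
      simp only [step, mul_sub, sum_sub_distrib] at hi' hj' ⊢
      linarith
  exact sub_eq_zero.mp (congr_fun hzero ν)

lemma isQuasiline_image {k n : ℕ} {a : Fin k → Fin n → Fin k} (ha : Function.Injective a)
    (hcoord : ∀ ν, (∀ i j, a i ν = a j ν) ∨ Function.Injective fun i => a i ν) :
    IsQuasiline k n (image a univ) := by
  refine ⟨by rw [card_image_of_injective _ ha, card_univ, Fintype.card_fin], fun ν => ?_⟩
  simp only [mem_image, mem_univ, true_and, forall_exists_index, forall_apply_eq_imp_iff]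
  refine (hcoord ν).imp id fun hinj i j hij => ?_
  exact fun h => hij (congrArg a (hinj h))

theorem ap_of_images_is_quasiline_general (k n : ℕ) :
    ∃ T₀ : ℕ, ∀ T : ℕ, T₀ ≤ T →
      ∀ a : Fin k → Fin n → Fin k, Function.Injective a →
        (∃ d : ℤ, ∀ i : ℕ, ∀ h : i + 1 < k,
          (∑ ν : Fin n, (T : ℤ) ^ (2 ^ ((ν : ℕ) + 1)) * (((a ⟨i + 1, h⟩ ν : ℕ) : ℤ) + 1)) -
          (∑ ν : Fin n, (T : ℤ) ^ (2 ^ ((ν : ℕ) + 1)) *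
            (((a ⟨i, Nat.lt_of_succ_lt h⟩ ν : ℕ) : ℤ) + 1)) = d) →
        IsQuasiline k n (Finset.image a Finset.univ) := by
  refine ⟨2 * k, fun T hT a ha ⟨d, hd⟩ => isQuasiline_image ha fun ν => ?_⟩
  obtain ⟨δ, hδ⟩ := isArithProg_coord_of_isArithProg_cubeEncode hT hd ν
  exact hδ.eq_const_or_injective.imp (fun h i j => Fin.ext (by exact_mod_cast h i j))
    fun h => h.of_comp (f := fun m : Fin k => ((m : ℕ) : ℤ))

/-- For sufficiently large `T`, if the images under `φ(a) = ∑_ν T^(2^ν)·a(ν)` of `k`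
distinct points of `[k]^n` form an arithmetic progression, then the points form a
quasiline. -/
theorem ap_of_images_is_quasiline (k n : ℕ) (hk : 3 ≤ k) (hn : 1 ≤ n) :
    ∃ T₀ : ℕ, ∀ T : ℕ, T₀ ≤ T →
      ∀ a : Fin k → Fin n → Fin k, Function.Injective a →
        (∃ d : ℤ, ∀ i : ℕ, ∀ h : i + 1 < k,
          (∑ ν : Fin n, (T : ℤ) ^ (2 ^ ((ν : ℕ) + 1)) * (((a ⟨i + 1, h⟩ ν : ℕ) : ℤ) + 1)) -
          (∑ ν : Fin n, (T : ℤ) ^ (2 ^ ((ν : ℕ) + 1)) *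
            (((a ⟨i, Nat.lt_of_succ_lt h⟩ ν : ℕ) : ℤ) + 1)) = d) →
        IsQuasiline k n (Finset.image a Finset.univ) :=
  ap_of_images_is_quasiline_general k n
end

section
/- Fix k ≥ 2 and ℓ ≥ 2k−1, and let I = { i ∈ [k, ℓ−k+1] : i ≢ −1 (mod k) }. For every permutation π of [n] and every vertex x = {a_1 < ... < a_ℓ} of the shift hypergraph Sh^{(k)}(n, ℓ), let ν(x, π) be the index j with π(a_j) maximal among π(a_1), ..., π(a_ℓ). Then the set Y_π = { x ∈ V(Sh^{(k)}(n, ℓ)) : ν(x, π) ∈ I } is an independent set in Sh^{(k)}(n, ℓ). -/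
/-!
Since `k ≤ ν(x_i) ≤ ℓ - k + 1`, the maximiser of `π` on each window `x_i` lies in the common
part `{a_k, …, a_ℓ}` of all `k` windows, so by injectivity of `π` it is one and the same element
`a_p` for every window. Its position in `x_i` is then `ν(x_i) = p - i + 1`, and as `i` runs over
the `k` consecutive values `1, …, k` one of these positions is `≡ -1 (mod k)`.
-/

theorem isMaxOn_Ico_add_of_forall_lt {β : Type*} [Preorder β] {f : ℕ → β} {i ℓ p : ℕ}
    (h : ∀ t < ℓ, f (i + t) ≤ f p) : IsMaxOn f (Set.Ico i (i + ℓ)) p := by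
  refine isMaxOn_iff.mpr fun x hx => ?_
  obtain ⟨t, rfl⟩ := Nat.exists_eq_add_of_le hx.1
  exact h t (by simp only [Set.mem_Ico] at hx; omega)

theorem IsMaxOn.eq_of_injOn {α β : Type*} [PartialOrder β] {f : α → β} {s t u : Set α}
    {a b : α} (hf : Set.InjOn f u) (ha : IsMaxOn f s a) (hb : IsMaxOn f t b)
    (hat : a ∈ t) (hbs : b ∈ s) (hau : a ∈ u) (hbu : b ∈ u) : a = b :=
  hf hau hbu (le_antisymm (isMaxOn_iff.mp hb a hat) (isMaxOn_iff.mp ha b hbs))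

theorem shift_hypergraph_Ypi_independent_general (k ℓ n : ℕ) (hk : 2 ≤ k)
    (π : ℕ → ℕ) (hπinj : Set.InjOn π ↑(Finset.Icc 1 n))
    (a : ℕ → ℕ) (ha : StrictMono a) (haN : ∀ j < k + ℓ - 1, a j ∈ Finset.Icc 1 n) :
    ¬ ∀ i < k, ∃ j : ℕ, 1 ≤ j ∧ j ≤ ℓ ∧
        (∀ t < ℓ, π (a (i + t)) ≤ π (a (i + j - 1))) ∧
        k ≤ j ∧ j ≤ ℓ - k + 1 ∧ ¬ (k ∣ j + 1) := by
  intro h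
  choose j hj_pos _ hj_max hk_le hle_ℓ hj_ndvd using h
  have hk0 : 0 < k := by omega
  have hinj : Set.InjOn (π ∘ a) (Set.Iio (k + ℓ - 1)) :=
    hπinj.comp ha.injective.injOn fun t ht => haN t ht
  have hmax : ∀ i (hi : i < k), IsMaxOn (π ∘ a) (Set.Ico i (i + ℓ)) (i + j i hi - 1) :=
    fun i hi => isMaxOn_Ico_add_of_forall_lt (hj_max i hi)
  have hsame_argmax : ∀ i (hi : i < k), i + j i hi - 1 = j 0 hk0 - 1 := by
    intro i hi
    have := hk_le i hi; have := hle_ℓ i hi; have := hk_le 0 hk0; have := hle_ℓ 0 hk0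
    refine (hmax i hi).eq_of_injOn hinj (by simpa using hmax 0 hk0) ?_ ?_ ?_ ?_ <;>
      simp only [Set.mem_Ico, Set.mem_Iio] <;> omega
  obtain ⟨i, hi, hdvd⟩ : ∃ i < k, k ∣ j 0 hk0 + 1 - i :=
    ⟨_, Nat.mod_lt _ hk0, Nat.dvd_sub_mod _⟩
  have := hsame_argmax i hi; have := hj_pos i hi; have := hk_le 0 hk0
  exact hj_ndvd i hi (by convert hdvd using 1; omega)

/-- In the shift hypergraph `Sh^(k)(n, ℓ)`, for a permutation `π` of `[n]` the set
`Y_π` of vertices whose argmax position (1-indexed) lies in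
`I = {j ∈ [k, ℓ-k+1] : j ≢ -1 (mod k)}` is independent: no edge, given by an
increasing sequence `a 0 < a 1 < ⋯ < a (k+ℓ-2)` in `[n]` with windows
`x_i = {a i, …, a (i+ℓ-1)}` for `i < k`, has all its vertices in `Y_π`. -/
theorem shift_hypergraph_Ypi_independent (k ℓ n : ℕ) (hk : 2 ≤ k)
    (hℓ : 2 * k - 1 ≤ ℓ)
    (π : ℕ → ℕ) (hπinj : Set.InjOn π ↑(Finset.Icc 1 n))
    (hπmaps : Set.MapsTo π ↑(Finset.Icc 1 n) ↑(Finset.Icc 1 n))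
    (a : ℕ → ℕ) (ha : StrictMono a) (haN : ∀ j < k + ℓ - 1, a j ∈ Finset.Icc 1 n) :
    ¬ ∀ i < k, ∃ j : ℕ, 1 ≤ j ∧ j ≤ ℓ ∧
        (∀ t < ℓ, π (a (i + t)) ≤ π (a (i + j - 1))) ∧
        k ≤ j ∧ j ≤ ℓ - k + 1 ∧ ¬ (k ∣ j + 1) :=
  shift_hypergraph_Ypi_independent_general k ℓ n hk π hπinj a ha haN
end

section
/- Let k ≥ 2 and μ ∈ (0, (k−1)/k), and set ℓ = ⌈2(k−1)²/((k−1) − kμ)⌉. Then the set I = { i ∈ [k, ℓ−k+1] : i ≢ −1 (mod k) } satisfies |I| ≥ μ·ℓ. -/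
open Finset

/-- For `k ≥ 2`, `μ ∈ (0, (k-1)/k)` and `ℓ = ⌈2(k-1)²/((k-1) - kμ)⌉`, the set
`I = {i ∈ [k, ℓ-k+1] : i ≢ -1 (mod k)}` has at least `μ·ℓ` elements. -/
theorem I_large (k : ℕ) (hk : 2 ≤ k) (μ : ℝ) (hμ0 : 0 < μ)
    (hμ1 : μ < ((k : ℝ) - 1) / k) :
    μ * (⌈2 * ((k : ℝ) - 1) ^ 2 / (((k : ℝ) - 1) - k * μ)⌉₊ : ℝ) ≤
      (((Finset.Icc k (⌈2 * ((k : ℝ) - 1) ^ 2 / (((k : ℝ) - 1) - k * μ)⌉₊ - k + 1)).filter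
        (fun i => ¬ (k ∣ i + 1))).card : ℝ) := by
  have hk0 : (0:ℝ) < k := by positivity
  set x : ℝ := 2 * ((k : ℝ) - 1) ^ 2 / (((k : ℝ) - 1) - k * μ) with hxdef
  set L : ℕ := ⌈x⌉₊ with hLdef
  have hd : (0:ℝ) < ((k:ℝ) - 1) - k * μ := by
    have := (lt_div_iff₀ hk0).mp hμ1
    nlinarith
  have hx : x * (((k:ℝ) - 1) - k * μ) = 2 * ((k : ℝ) - 1) ^ 2 :=
    div_mul_cancel₀ _ (ne_of_gt hd)
  have hLx : x ≤ (L:ℝ) := Nat.le_ceil x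
  have hk1R : (1:ℝ) ≤ (k:ℝ) - 1 := by
    have : (2:ℝ) ≤ k := by exact_mod_cast hk
    linarith
  have hxbig : 2 * (k:ℝ) - 2 < x := by
    rw [hxdef, lt_div_iff₀ hd]
    nlinarith [mul_pos hk0 hμ0]
  have hLk : 2 * k - 1 ≤ L := by
    by_contra h
    push_neg at h
    have h1 : L + 2 ≤ 2 * k := by omega
    have h2 : (L:ℝ) + 2 ≤ 2 * k := by exact_mod_cast h1
    linarith
  set m : ℕ := L - k + 1 with hmdef
  have hm : m + k = L + 1 := by omega
  have hmR : (m:ℝ) + k = (L:ℝ) + 1 := by exact_mod_cast hm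
  set S : Finset ℕ := (Icc k m).filter (fun i => k ∣ i + 1) with hSdef
  set I : Finset ℕ := (Icc k m).filter (fun i => ¬ (k ∣ i + 1)) with hIdef
  have hsum : S.card + I.card = (Icc k m).card :=
    Finset.card_filter_add_card_filter_not _
  have hcard : (Icc k m).card + 2 * k = L + 2 := by
    rw [Nat.card_Icc]; omega
  -- count multiples
  set T : Finset ℕ := (Ioc k (m+1)).filter (fun j => k ∣ j) with hTdef
  have hinj : S.card ≤ T.card := by
    apply Finset.card_le_card_of_injOn (fun i => i + 1)
    · intro i hi
      simp only [Finset.mem_coe, hSdef, mem_filter, mem_Icc] at hi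
      simp only [Finset.mem_coe, hTdef, mem_filter, mem_Ioc]
      exact ⟨⟨by omega, by omega⟩, hi.2⟩
    · intro a _ b _ hab
      simpa using hab
  have hkm1 : k ≤ m + 1 := by omega
  have hss : (Ioc 0 k).filter (fun j => k ∣ j) ⊆ (Ioc 0 (m+1)).filter (fun j => k ∣ j) :=
    Finset.filter_subset_filter _ (Finset.Ioc_subset_Ioc_right hkm1)
  have hTeq : T = (Ioc 0 (m+1)).filter (fun j => k ∣ j) \ (Ioc 0 k).filter (fun j => k ∣ j) := by
    ext j
    simp only [hTdef, mem_filter, mem_Ioc, mem_sdiff]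
    constructor
    · rintro ⟨⟨h1, h2⟩, hdvd⟩
      refine ⟨⟨⟨by omega, h2⟩, hdvd⟩, ?_⟩
      rintro ⟨⟨_, hle⟩, _⟩
      omega
    · rintro ⟨⟨⟨h0, h2⟩, hdvd⟩, hn⟩
      refine ⟨⟨?_, h2⟩, hdvd⟩
      by_contra h
      exact hn ⟨⟨h0, by omega⟩, hdvd⟩
  have hT : T.card = (m+1)/k - 1 := by
    rw [hTeq, Finset.card_sdiff_of_subset hss, Nat.Ioc_filter_dvd_card_eq_div,
      Nat.Ioc_filter_dvd_card_eq_div, Nat.div_self (by omega : 0 < k)]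
  have hdiv1 : 1 ≤ (m+1)/k := (Nat.one_le_div_iff (by omega)).mpr hkm1
  have hS : S.card + 1 ≤ (m+1)/k := by omega
  -- real estimates
  have hdivR : (((m+1)/k : ℕ) : ℝ) ≤ ((m:ℝ)+1)/(k:ℝ) := by
    have := Nat.cast_div_le (m := m+1) (n := k) (α := ℝ)
    push_cast at this ⊢
    exact this
  have hSR : (S.card : ℝ) + 1 ≤ ((m:ℝ)+1)/(k:ℝ) := by
    have h1 : ((S.card : ℕ) : ℝ) + 1 ≤ (((m+1)/k : ℕ) : ℝ) := by exact_mod_cast hS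
    linarith
  have hSk : (S.card : ℝ) * k ≤ (L:ℝ) + 2 - 2*k := by
    have := (le_div_iff₀ hk0).mp hSR
    nlinarith
  have hsumR : (S.card : ℝ) + (I.card : ℝ) = ((Icc k m).card : ℝ) := by exact_mod_cast hsum
  have hcardR : ((Icc k m).card : ℝ) + 2*k = (L:ℝ) + 2 := by exact_mod_cast hcard
  have hIc : (I.card : ℝ) = (L:ℝ) + 2 - 2*k - S.card := by linarith
  have hdL : 2 * ((k : ℝ) - 1) ^ 2 ≤ (L:ℝ) * (((k:ℝ) - 1) - k * μ) := by
    calc 2 * ((k : ℝ) - 1) ^ 2 = x * (((k:ℝ) - 1) - k * μ) := hx.symm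
    _ ≤ (L:ℝ) * (((k:ℝ) - 1) - k * μ) := mul_le_mul_of_nonneg_right hLx hd.le
  have hfin : (k:ℝ) * (μ * L) ≤ (k:ℝ) * (I.card : ℝ) := by
    rw [hIc]
    nlinarith
  have := le_of_mul_le_mul_left hfin hk0
  convert this using 2
end
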